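/- Let ρ : T³ → ℝ be smooth and positive. Then ∫_{T³} |∇(ρ^{1/4})|^4 dx ≤ 8 ∫_{T³} ρ |∇²(log ρ)|² dx, where |∇² log ρ| is the Frobenius norm of the Hessian of log ρ. -/

import Mathlib

open MeasureTheory Real

/-- Partial derivative in direction `i`. -/
noncomputable def pd (i : Fin 3) (f : (Fin 3 → ℝ) → ℝ) : (Fin 3 → ℝ) → ℝ :=
  fun x => fderiv ℝ f x (Pi.single i 1)

/-- The fundamental domain of the 3-torus, the unit cube. -/
def T3 : Set (Fin 3 → ℝ) := Set.univ.pi fun _ => Set.Icc 0 1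

/-- `f` is 1-periodic in each coordinate direction. -/
def Periodic3 (f : (Fin 3 → ℝ) → ℝ) : Prop :=
  ∀ (x : Fin 3 → ℝ) (i : Fin 3), f (x + Pi.single i 1) = f x

open scoped ContDiff

section Aux

lemma T3_eq : T3 = Set.Icc (0 : Fin 3 → ℝ) 1 := by rw [← Set.pi_univ_Icc]; rfl

lemma isCompact_T3 : IsCompact T3 := T3_eq ▸ isCompact_Icc

lemma measurableSet_T3 : MeasurableSet T3 := T3_eq ▸ measurableSet_Icc

lemma integrableOn_T3 {f : (Fin 3 → ℝ) → ℝ} (hf : Continuous f) : IntegrableOn f T3 :=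
  hf.continuousOn.integrableOn_compact isCompact_T3

lemma contDiff_pd {f : (Fin 3 → ℝ) → ℝ} (hf : ContDiff ℝ ∞ f) (i : Fin 3) :
    ContDiff ℝ ∞ (pd i f) :=
  ((contDiff_infty_iff_fderiv.mp hf).2).clm_apply contDiff_const

lemma fderiv_translate {f : (Fin 3 → ℝ) → ℝ} (hf : Differentiable ℝ f) (c x : Fin 3 → ℝ) :
    fderiv ℝ (fun y => f (y + c)) x = fderiv ℝ f (x + c) := by
  have h1 : HasFDerivAt (fun y : Fin 3 → ℝ => y + c) (ContinuousLinearMap.id ℝ _) x :=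
    (hasFDerivAt_id x).add_const c
  have h2 := ((hf (x + c)).hasFDerivAt.comp x h1)
  simpa [Function.comp_def] using h2.fderiv

lemma periodic3_pd {f : (Fin 3 → ℝ) → ℝ} (hf : Differentiable ℝ f) (hp : Periodic3 f)
    (i : Fin 3) : Periodic3 (pd i f) := by
  intro x j
  have : f = fun y => f (y + Pi.single j 1) := by funext y; rw [hp]
  show fderiv ℝ f (x + Pi.single j 1) (Pi.single i 1) = fderiv ℝ f x (Pi.single i 1)
  conv_rhs => rw [this, fderiv_translate hf]

lemma insertNth_one_eq (i : Fin 3) (x : Fin 2 → ℝ) :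
    (Fin.insertNth i (1:ℝ) x : Fin 3 → ℝ)
      = (Fin.insertNth i (0:ℝ) x : Fin 3 → ℝ) + Pi.single i 1 := by
  funext j
  refine Fin.succAboveCases i ?_ ?_ j
  · simp
  · intro k
    simp [Fin.insertNth_apply_succAbove, Pi.single_eq_of_ne (Fin.succAbove_ne i k)]

lemma integral_pd_zero {g : (Fin 3 → ℝ) → ℝ} (hg : ContDiff ℝ ∞ g) (hp : Periodic3 g)
    (i : Fin 3) : ∫ x in T3, pd i g x = 0 := by
  have hd : Differentiable ℝ g := hg.differentiable (by simp)
  have hpd : Continuous (pd i g) := (contDiff_pd hg i).continuous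
  have hsum : (fun x : Fin 3 → ℝ => ∑ j : Fin 3,
      (if j = i then fderiv ℝ g x else 0) (Pi.single j 1)) = pd i g := by
    funext x
    rw [Finset.sum_eq_single i (fun b _ hb => by simp [hb]) (by simp)]
    simp [pd]
  have key := integral_divergence_of_hasFDerivAt_off_countable'
    (a := (0 : Fin 3 → ℝ)) (b := 1) (n := 2) (by intro j; simp [Pi.le_def] : (0:Fin 3 → ℝ) ≤ 1)
    (f := fun j => if j = i then g else fun _ => 0)
    (f' := fun j x => if j = i then fderiv ℝ g x else 0)
    (s := ∅) Set.countable_empty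
    (by
      intro j
      by_cases h : j = i <;> simp [h, hd.continuous.continuousOn, continuousOn_const])
    (by
      intro x _ j
      by_cases h : j = i <;> simp only [h, if_true, if_false]
      · exact (hd x).hasFDerivAt
      · simpa using (hasFDerivAt_const (0:ℝ) x))
    (by
      rw [show (fun x : Fin 3 → ℝ => ∑ j : Fin 3,
          ((fun j x => if j = i then fderiv ℝ g x else 0) j x) (Pi.single j 1)) = pd i g
        from hsum, ← T3_eq]
      exact integrableOn_T3 hpd)
  rw [T3_eq]
  have h2 : ∀ x : Fin 2 → ℝ, g (Fin.insertNth i (1:ℝ) x) = g (Fin.insertNth i (0:ℝ) x) := by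
    intro x; rw [insertNth_one_eq, hp]
  calc (∫ x in Set.Icc (0:Fin 3 → ℝ) 1, pd i g x)
      = ∫ x in Set.Icc (0:Fin 3 → ℝ) 1, ∑ j : Fin 3,
          (if j = i then fderiv ℝ g x else 0) (Pi.single j 1) := by rw [hsum]
    _ = 0 := by
        rw [key, Finset.sum_eq_single i (fun b _ hb => by simp [hb]) (by simp)]
        simp only [eq_self_iff_true, if_true, Pi.one_apply, Pi.zero_apply, h2, sub_self]

lemma pd_mul {f g : (Fin 3 → ℝ) → ℝ} {x : Fin 3 → ℝ} (hf : DifferentiableAt ℝ f x)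
    (hg : DifferentiableAt ℝ g x) (i : Fin 3) :
    pd i (fun y => f y * g y) x = pd i f x * g x + f x * pd i g x := by
  show fderiv ℝ (fun y => f y * g y) x (Pi.single i 1) = _
  rw [fderiv_fun_mul hf hg]
  simp [pd]; ring

lemma pd_sum {F : Fin 3 → (Fin 3 → ℝ) → ℝ} {x : Fin 3 → ℝ}
    (hF : ∀ j, DifferentiableAt ℝ (F j) x) (i : Fin 3) :
    pd i (fun y => ∑ j : Fin 3, F j y) x = ∑ j : Fin 3, pd i (F j) x := by
  show fderiv ℝ (fun y => ∑ j : Fin 3, F j y) x (Pi.single i 1) = _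
  rw [fderiv_fun_sum (fun j _ => hF j)]
  simp [pd]

lemma pd_log {f : (Fin 3 → ℝ) → ℝ} {x : Fin 3 → ℝ} (hf : DifferentiableAt ℝ f x)
    (hx : f x ≠ 0) (i : Fin 3) :
    pd i (fun y => Real.log (f y)) x = (f x)⁻¹ * pd i f x := by
  show fderiv ℝ (fun y => Real.log (f y)) x (Pi.single i 1) = _
  rw [(hf.hasFDerivAt.log hx).fderiv]
  simp [pd]

lemma pd_rpow {f : (Fin 3 → ℝ) → ℝ} {x : Fin 3 → ℝ} (hf : DifferentiableAt ℝ f x)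
    (hx : 0 < f x) (p : ℝ) (i : Fin 3) :
    pd i (fun y => f y ^ p) x = p * f x ^ (p - 1) * pd i f x := by
  show fderiv ℝ (fun y => f y ^ p) x (Pi.single i 1) = _
  rw [(hf.hasFDerivAt.rpow_const (Or.inl hx.ne')).fderiv]
  simp [pd]

end Aux

set_option maxHeartbeats 1000000 in
theorem jungel_first_inequality
    (ρ : (Fin 3 → ℝ) → ℝ) (hρ : ContDiff ℝ (⊤ : ℕ∞) ρ) (hpos : ∀ x, 0 < ρ x)
    (hper : Periodic3 ρ) :
    (∫ x in T3, (∑ i : Fin 3, (pd i (fun y => ρ y ^ ((1 : ℝ) / 4)) x) ^ 2) ^ 2)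
      ≤ 8 * ∫ x in T3, ρ x *
          ∑ i : Fin 3, ∑ j : Fin 3,
            (pd i (pd j (fun y => Real.log (ρ y))) x) ^ 2 := by
  have hρ' : ContDiff ℝ ∞ ρ := hρ.of_le (by simp)
  have hρd : Differentiable ℝ ρ := hρ'.differentiable (by simp)
  have hne : ∀ x, ρ x ≠ 0 := fun x => (hpos x).ne'
  set u : (Fin 3 → ℝ) → ℝ := fun y => Real.log (ρ y) with hu_def
  have hu : ContDiff ℝ ∞ u := hρ'.log hne
  have hud : Differentiable ℝ u := hu.differentiable (by simp)
  set v : Fin 3 → (Fin 3 → ℝ) → ℝ := fun j => pd j u with hv_def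
  have hv : ∀ j, ContDiff ℝ ∞ (v j) := fun j => contDiff_pd hu j
  have hvd : ∀ j, Differentiable ℝ (v j) := fun j =>
    (hv j).differentiable (by simp)
  set H : Fin 3 → Fin 3 → (Fin 3 → ℝ) → ℝ := fun i j => pd i (v j) with hH_def
  have hHc : ∀ i j, Continuous (H i j) := fun i j => (contDiff_pd (hv j) i).continuous
  set S : (Fin 3 → ℝ) → ℝ := fun x => ∑ j : Fin 3, (v j x) ^ 2 with hS_def
  have hSc : ContDiff ℝ ∞ S := ContDiff.sum fun j _ => (hv j).pow 2
  have hSd : Differentiable ℝ S := hSc.differentiable (by simp)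
  set Q : (Fin 3 → ℝ) → ℝ := fun x => ∑ i : Fin 3, ∑ j : Fin 3, (H i j x) ^ 2 with hQ_def
  have hQc : Continuous Q := by
    apply continuous_finset_sum; intro i _
    exact continuous_finset_sum _ fun j _ => (hHc i j).pow 2
  set G : Fin 3 → (Fin 3 → ℝ) → ℝ :=
    fun i x => (∑ j : Fin 3, 2 * v j x * H i j x) * v i x + S x * H i i x with hG_def
  have hGc : ∀ i, Continuous (G i) := by
    intro i
    apply Continuous.add
    · exact (continuous_finset_sum _ fun j _ =>
        (continuous_const.mul (hv j).continuous).mul (hHc i j)).mul (hv i).continuous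
    · exact hSc.continuous.mul (hHc i i)
  set F : Fin 3 → (Fin 3 → ℝ) → ℝ := fun i x => ρ x * (S x * v i x) with hF_def
  have hFc : ∀ i, ContDiff ℝ ∞ (F i) := fun i => hρ'.mul (hSc.mul (hv i))
  -- periodicity
  have hpu : Periodic3 u := fun x i => by simp only [hu_def]; rw [hper]
  have hpv : ∀ j, Periodic3 (v j) := fun j => periodic3_pd hud hpu j
  have hpS : Periodic3 S := fun x i => Finset.sum_congr rfl fun j _ => by rw [hpv j x i]
  have hpF : ∀ i, Periodic3 (F i) := fun i x k => by
    simp only [hF_def]; rw [hper, hpS, hpv]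
  -- derivative identities
  have hpdρ : ∀ (j : Fin 3) (x : Fin 3 → ℝ), pd j ρ x = ρ x * v j x := by
    intro j x
    have h : v j x = (ρ x)⁻¹ * pd j ρ x := pd_log (hρd x) (hne x) j
    rw [h, ← mul_assoc, mul_inv_cancel₀ (hne x), one_mul]
  have hpdS : ∀ (i : Fin 3) (x : Fin 3 → ℝ),
      pd i S x = ∑ j : Fin 3, 2 * v j x * H i j x := by
    intro i x
    have h1 : pd i S x = ∑ j : Fin 3, pd i (fun y => v j y ^ 2) x := by
      show pd i (fun y => ∑ j : Fin 3, v j y ^ 2) x = _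
      exact pd_sum (fun j => ((hvd j) x).pow 2) i
    have h2 : ∀ j : Fin 3, pd i (fun y => v j y ^ 2) x = 2 * v j x * H i j x := by
      intro j
      have he : (fun y => v j y ^ 2) = fun y => v j y * v j y := by funext y; ring
      rw [he, pd_mul (hvd j x) (hvd j x) i]
      have : pd i (v j) x = H i j x := rfl
      rw [this]; ring
    rw [h1]; exact Finset.sum_congr rfl fun j _ => h2 j
  have hpdF : ∀ (i : Fin 3) (x : Fin 3 → ℝ),
      pd i (F i) x = ρ x * (S x * v i x ^ 2) + ρ x * G i x := by
    intro i x
    have hg : DifferentiableAt ℝ (fun y => S y * v i y) x := (hSd x).mul (hvd i x)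
    have h1 : pd i (F i) x
        = pd i ρ x * (S x * v i x) + ρ x * pd i (fun y => S y * v i y) x := by
      show pd i (fun y => ρ y * (S y * v i y)) x = _
      exact pd_mul (hρd x) hg i
    have h2 : pd i (fun y => S y * v i y) x = pd i S x * v i x + S x * H i i x := by
      rw [pd_mul (hSd x) (hvd i x) i]
    rw [h1, h2, hpdρ, hpdS]
    simp only [hG_def]
    try ring
  -- integrability
  have int1 : IntegrableOn (fun x => ρ x * S x ^ 2) T3 :=
    integrableOn_T3 (hρ'.continuous.mul (hSc.continuous.pow 2))
  have intG : IntegrableOn (fun x => ρ x * ∑ i : Fin 3, G i x) T3 :=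
    integrableOn_T3 (hρ'.continuous.mul (continuous_finset_sum _ fun i _ => hGc i))
  have intQ : IntegrableOn (fun x => ρ x * Q x) T3 :=
    integrableOn_T3 (hρ'.continuous.mul hQc)
  -- the divergence identity
  have key : (∫ x in T3, (ρ x * S x ^ 2 + ρ x * ∑ i : Fin 3, G i x)) = 0 := by
    have h1 : (∫ x in T3, ∑ i : Fin 3, pd i (F i) x) = 0 := by
      rw [MeasureTheory.integral_finset_sum _ (fun i _ => integrableOn_T3
        (contDiff_pd (hFc i) i).continuous)]
      exact Finset.sum_eq_zero fun i _ => integral_pd_zero (hFc i) (hpF i) i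
    rw [← h1]
    refine setIntegral_congr_fun measurableSet_T3 fun x _ => ?_
    have hs : S x = v 0 x ^ 2 + v 1 x ^ 2 + v 2 x ^ 2 := by
      show (∑ j : Fin 3, v j x ^ 2) = _
      rw [Fin.sum_univ_three]
    simp only [Fin.sum_univ_three, hpdF]
    linear_combination (ρ x * S x) * hs
  rw [integral_add int1 intG] at key
  -- the pointwise bound
  have hbound : ∀ x : Fin 3 → ℝ, -(ρ x * ∑ i : Fin 3, G i x)
      ≤ 2⁻¹ * (ρ x * S x ^ 2) + (15 / 2) * (ρ x * Q x) := by
    intro x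
    have hT : -(∑ i : Fin 3, G i x) ≤ 2⁻¹ * S x ^ 2 + (15 / 2) * Q x := by
      simp only [hG_def, hS_def, hQ_def, Fin.sum_univ_three]
      nlinarith [sq_nonneg (v 0 x * v 0 x + 5 * H 0 0 x),
        sq_nonneg (v 0 x * v 1 x + 5 * H 0 1 x), sq_nonneg (v 0 x * v 2 x + 5 * H 0 2 x),
        sq_nonneg (v 1 x * v 0 x + 5 * H 1 0 x), sq_nonneg (v 1 x * v 1 x + 5 * H 1 1 x),
        sq_nonneg (v 1 x * v 2 x + 5 * H 1 2 x), sq_nonneg (v 2 x * v 0 x + 5 * H 2 0 x),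
        sq_nonneg (v 2 x * v 1 x + 5 * H 2 1 x), sq_nonneg (v 2 x * v 2 x + 5 * H 2 2 x),
        sq_nonneg (v 0 x ^ 2 + v 1 x ^ 2 + v 2 x ^ 2 + 5 * H 0 0 x),
        sq_nonneg (v 0 x ^ 2 + v 1 x ^ 2 + v 2 x ^ 2 + 5 * H 1 1 x),
        sq_nonneg (v 0 x ^ 2 + v 1 x ^ 2 + v 2 x ^ 2 + 5 * H 2 2 x),
        sq_nonneg (H 0 1 x), sq_nonneg (H 0 2 x), sq_nonneg (H 1 0 x),
        sq_nonneg (H 1 2 x), sq_nonneg (H 2 0 x), sq_nonneg (H 2 1 x)]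
    have hm := mul_le_mul_of_nonneg_left hT (hpos x).le
    nlinarith [hm]
  -- integrate the bound
  have hmono : (∫ x in T3, -(ρ x * ∑ i : Fin 3, G i x))
      ≤ ∫ x in T3, (2⁻¹ * (ρ x * S x ^ 2) + (15 / 2) * (ρ x * Q x)) := by
    refine setIntegral_mono_on intG.neg ?_ measurableSet_T3 fun x _ => hbound x
    exact (int1.const_mul _).add (intQ.const_mul _)
  rw [integral_neg, integral_add (int1.const_mul _) (intQ.const_mul _),
    integral_const_mul, integral_const_mul] at hmono
  have hI : (∫ x in T3, ρ x * S x ^ 2) ≤ 15 * ∫ x in T3, ρ x * Q x := by linarith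
  have hQ0 : (0:ℝ) ≤ ∫ x in T3, ρ x * Q x := by
    refine setIntegral_nonneg measurableSet_T3 fun x _ => ?_
    exact mul_nonneg (hpos x).le (Finset.sum_nonneg fun i _ =>
      Finset.sum_nonneg fun j _ => sq_nonneg _)
  -- identify the left-hand side
  have hP1 : ∀ (i : Fin 3) (x : Fin 3 → ℝ),
      pd i (fun y => ρ y ^ ((1 : ℝ) / 4)) x = 4⁻¹ * ρ x ^ ((1 : ℝ) / 4) * v i x := by
    intro i x
    rw [pd_rpow (hρd x) (hpos x) _ i, hpdρ]
    have hx : ρ x ^ ((1 : ℝ) / 4 - 1) * ρ x = ρ x ^ ((1 : ℝ) / 4) := by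
      nth_rewrite 2 [← Real.rpow_one (ρ x)]
      rw [← Real.rpow_add (hpos x)]
      norm_num
    linear_combination ((1:ℝ)/4 * v i x) * hx
  have hLHS : ∀ x : Fin 3 → ℝ,
      (∑ i : Fin 3, (pd i (fun y => ρ y ^ ((1 : ℝ) / 4)) x) ^ 2) ^ 2
        = 256⁻¹ * (ρ x * S x ^ 2) := by
    intro x
    have h4 : (ρ x ^ ((1 : ℝ) / 4)) ^ (4 : ℕ) = ρ x := by
      rw [← Real.rpow_natCast (ρ x ^ ((1 : ℝ) / 4)) 4, ← Real.rpow_mul (hpos x).le]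
      norm_num
    calc (∑ i : Fin 3, (pd i (fun y => ρ y ^ ((1 : ℝ) / 4)) x) ^ 2) ^ 2
        = (∑ i : Fin 3, (4⁻¹ * ρ x ^ ((1 : ℝ) / 4) * v i x) ^ 2) ^ 2 := by
          rw [Finset.sum_congr rfl fun i (_ : i ∈ Finset.univ) => by rw [hP1 i x]]
      _ = 256⁻¹ * ((ρ x ^ ((1 : ℝ) / 4)) ^ (4 : ℕ) * S x ^ 2) := by
          simp only [hS_def, Fin.sum_univ_three]
          ring
      _ = 256⁻¹ * (ρ x * S x ^ 2) := by rw [h4]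
  calc (∫ x in T3, (∑ i : Fin 3, (pd i (fun y => ρ y ^ ((1 : ℝ) / 4)) x) ^ 2) ^ 2)
      = ∫ x in T3, 256⁻¹ * (ρ x * S x ^ 2) :=
        setIntegral_congr_fun measurableSet_T3 fun x _ => hLHS x
    _ = 256⁻¹ * ∫ x in T3, ρ x * S x ^ 2 := integral_const_mul _ _
    _ ≤ 256⁻¹ * (15 * ∫ x in T3, ρ x * Q x) := by
        have := mul_le_mul_of_nonneg_left hI (by norm_num : (0:ℝ) ≤ 256⁻¹)
        linarith
    _ ≤ 8 * ∫ x in T3, ρ x * Q x := by linarith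
    _ = 8 * ∫ x in T3, ρ x *
          ∑ i : Fin 3, ∑ j : Fin 3, (pd i (pd j u) x) ^ 2 := rfl
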